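/- Let R be a commutative ℚ-algebra equipped with a pre-λ structure σ, let f ∈ ℤ[[t]] ⊆ R[[t]] have constant coefficient 1, and let (a_k)_{k≥1} be the unique integers with f = Π_{k≥1} (1 − t^k)^{−a_k}. For r ∈ R define the power f^{Pow r} := Π_{k≥1} σ(a_k·r)(t^k) ∈ R[[t]], where σ(a_k·r)(t^k) denotes the substitution t ↦ t^k applied to σ(a_k·r) (the product converges coefficientwise since σ(a_k·r)(t^k) ≡ 1 mod t^k). Then f^{Pow r} = Π_{k≥1} exp( ψ'_k(r) · log f(t^k) ), where f(t^k) is f with t ↦ t^k, log(1 + g) := Σ_{n≥1} (−1)^{n+1} g^n/n and exp(g) := Σ_{n≥0} g^n/n! for g of zero constant term, and this product also converges coefficientwise. -/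

import Mathlib

open PowerSeries Finset

/-- Integer power `g^a` of a power series `g` whose constant coefficient is a unit. -/
noncomputable def unitZPow {R : Type*} [CommRing R] (g : PowerSeries R) (a : ℤ) :
    PowerSeries R :=
  if 0 ≤ a then g ^ a.toNat else Ring.inverse (g ^ (-a).toNat)

/-- Substitution `t ↦ t^k` in a formal power series (for `k ≥ 1`):
`(substPow k g)(t) = g(t^k)`. -/
noncomputable def substPow {R : Type*} [CommRing R] (k : ℕ) (g : PowerSeries R) :
    PowerSeries R :=
  PowerSeries.mk fun j => if k ∣ j then PowerSeries.coeff (R := R) (j / k) g else 0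

/-- The exponential `exp(g) = Σ_{n≥0} g^n/n!` of a formal power series over a `ℚ`-algebra.
For `g` with zero constant term each coefficient is a finite sum. -/
noncomputable def expPS {A : Type*} [CommRing A] [Algebra ℚ A] (g : PowerSeries A) :
    PowerSeries A :=
  PowerSeries.mk fun n =>
    ∑ m ∈ Finset.range (n + 1), (m.factorial : ℚ)⁻¹ • PowerSeries.coeff (R := A) n (g ^ m)

/-- The logarithm `log(1 + h) = Σ_{m≥1} (-1)^{m+1} h^m/m` for `h` of zero constant term;
each coefficient is a finite sum. -/
noncomputable def logOnePlus {A : Type*} [CommRing A] [Algebra ℚ A] (h : PowerSeries A) :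
    PowerSeries A :=
  PowerSeries.mk fun n =>
    ∑ m ∈ Finset.Icc 1 n, (((-1 : ℚ) ^ (m + 1) * (m : ℚ)⁻¹)) • PowerSeries.coeff (R := A) n (h ^ m)

/-- The Möbius-inverted Adams operations `ψ'_k(r) := (1/k) Σ_{d ∣ k} μ(k/d) ψ_d(r)`. -/
noncomputable def moebiusAdams {R : Type*} [CommRing R] [Algebra ℚ R]
    (ψ : ℕ → R → R) (k : ℕ) (r : R) : R :=
  ((k : ℚ)⁻¹ : ℚ) • ∑ d ∈ k.divisors, (ArithmeticFunction.moebius (k / d) : ℤ) • ψ d r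

/-!
Both sides have constant coefficient 1, and over a `ℚ`-algebra such a series is determined
modulo `X ^ (n + 1)` by its logarithmic derivative `X P' / P` modulo `X ^ (n + 1)`.
Logarithmic derivatives add over products. The Adams series `Ψ_s = Σ ψ_j(s) t^j` is that of
`σ(s)`, hence additive in `s`, so the left side has logarithmic derivative
`Σ_k k a_k Ψ_r(t^k)`. Read off the Euler product, `f` has logarithmic derivative
`Σ_i (w * ζ)(i) t^i` with `w(k) = k a_k`; as `exp(c log g)` has `c` times the logarithmic
derivative of `g`, the right side has `Σ_k k ψ'_k(r) (Σ_i (w * ζ)(i) t^i)(t^k)`. In degree `i`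
these are the Dirichlet convolutions `w * ψ(r)` and `(μ * ψ(r)) * (w * ζ)`, equal as `μ * ζ = 1`.
-/

open ArithmeticFunction
open scoped ArithmeticFunction.zeta ArithmeticFunction.Moebius

section Substitution

variable {A : Type*} [CommRing A]

theorem substPow_eq_expand {k : ℕ} (hk : k ≠ 0) (g : A⟦X⟧) :
    substPow k g = expand k hk g := by
  ext j
  rw [substPow, coeff_mk, coeff_expand]

theorem constantCoeff_substPow (k : ℕ) (g : A⟦X⟧) :
    constantCoeff (substPow k g) = constantCoeff g := by
  rw [← coeff_zero_eq_constantCoeff_apply, substPow, coeff_mk]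
  simp

theorem substPow_smul (k : ℕ) (c : A) (g : A⟦X⟧) :
    substPow k (c • g) = c • substPow k g := by
  ext j
  simp only [substPow, coeff_mk, coeff_smul, smul_ite, smul_zero]

theorem coeff_X_mul_derivative (g : A⟦X⟧) (n : ℕ) :
    coeff n (X * d⁄dX A g) = n * coeff n g := by
  cases n with
  | zero => simp
  | succ n => rw [coeff_succ_X_mul, coeff_derivative, mul_comm]; push_cast; ring

theorem X_mul_derivative_expand {k : ℕ} (hk : k ≠ 0) (g : A⟦X⟧) :
    X * d⁄dX A (expand k hk g) = k • expand k hk (X * d⁄dX A g) := by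
  rw [expand_apply, derivative_subst (HasSubst.X_pow hk), ← expand_apply k hk, map_mul, expand_X,
    derivative_pow, derivative_X, mul_one, nsmul_eq_mul, ← mul_pow_sub_one hk X]
  ring

theorem X_pow_dvd_X_mul_derivative {m : ℕ} {g : A⟦X⟧} (h : X ^ m ∣ g) :
    X ^ m ∣ X * d⁄dX A g := by
  rw [X_pow_dvd_iff] at *
  intro j hj
  rw [coeff_X_mul_derivative, h j hj, mul_zero]

theorem coeff_pow_of_lt {g : A⟦X⟧} (hg : constantCoeff g = 0) {n m : ℕ} (h : n < m) :
    coeff n (g ^ m) = 0 :=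
  X_pow_dvd_iff.1 (pow_dvd_pow_of_dvd (X_dvd_iff.2 hg) m) n h

end Substitution

section LogDeriv

variable {A : Type*} [CommRing A]

def HasLogDeriv (P E : A⟦X⟧) : Prop := X * d⁄dX A P = E * P

namespace HasLogDeriv

variable {P Q E F : A⟦X⟧}

theorem mul (hP : HasLogDeriv P E) (hQ : HasLogDeriv Q F) :
    HasLogDeriv (P * Q) (E + F) := by
  unfold HasLogDeriv at *
  rw [Derivation.leibniz, smul_eq_mul, smul_eq_mul]
  linear_combination P * hQ + Q * hP

theorem prod {ι : Type*} {s : Finset ι} {P E : ι → A⟦X⟧}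
    (h : ∀ i ∈ s, HasLogDeriv (P i) (E i)) :
    HasLogDeriv (∏ i ∈ s, P i) (∑ i ∈ s, E i) := by
  classical
  induction s using Finset.induction_on with
  | empty => simp [HasLogDeriv]
  | insert i s hi ih =>
    rw [prod_insert hi, sum_insert hi]
    exact (h i (mem_insert_self i s)).mul (ih fun j hj => h j (mem_insert_of_mem hj))

theorem pow (h : HasLogDeriv P E) (n : ℕ) : HasLogDeriv (P ^ n) (n • E) := by
  induction n with
  | zero => simp [HasLogDeriv]
  | succ n ih => rw [pow_succ, succ_nsmul]; exact ih.mul h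

theorem ringInverse (hu : IsUnit P) (h : HasLogDeriv P E) :
    HasLogDeriv (Ring.inverse P) (-E) := by
  have hinv : Ring.inverse P * P = 1 := Ring.inverse_mul_cancel P hu
  have hD : Ring.inverse P * d⁄dX A P + P * d⁄dX A (Ring.inverse P) = 0 := by
    simpa [smul_eq_mul, add_comm] using congrArg (d⁄dX A) hinv
  refine hu.mul_right_cancel ?_
  unfold HasLogDeriv at h
  linear_combination X * hD - Ring.inverse P * h

theorem unitZPow (hu : IsUnit P) (h : HasLogDeriv P E) (z : ℤ) :
    HasLogDeriv (unitZPow P z) (z • E) := by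
  unfold _root_.unitZPow
  split_ifs with hz
  · lift z to ℕ using hz
    simpa using h.pow z
  · obtain ⟨n, rfl⟩ : ∃ n : ℕ, z = -n := ⟨(-z).toNat, by omega⟩
    simpa using (h.pow n).ringInverse (hu.pow n)

theorem unique (hu : IsUnit P) (hE : HasLogDeriv P E) (hF : HasLogDeriv P F) : E = F :=
  hu.mul_right_cancel (hE.symm.trans hF)

theorem substPow {k : ℕ} (hk : k ≠ 0) (h : HasLogDeriv P E) :
    HasLogDeriv (substPow k P) (k • substPow k E) := by
  unfold HasLogDeriv at *
  rw [substPow_eq_expand hk, substPow_eq_expand hk, X_mul_derivative_expand, h, map_mul,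
    smul_mul_assoc]

theorem map {B : Type*} [CommRing B] (φ : A →+* B) (h : HasLogDeriv P E) :
    HasLogDeriv (PowerSeries.map φ P) (PowerSeries.map φ E) := by
  have hD : d⁄dX B (PowerSeries.map φ P) = PowerSeries.map φ (d⁄dX A P) := by
    ext n
    simp [coeff_derivative]
  unfold HasLogDeriv at *
  rw [hD, ← map_X φ, ← map_mul, h, map_mul]

theorem X_pow_dvd_of_congr {m : ℕ} (h : HasLogDeriv P E) (hQ : X ^ m ∣ Q - P)
    (hF : X ^ m ∣ F - E) : X ^ m ∣ X * d⁄dX A Q - F * Q := by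
  have key : X * d⁄dX A Q - F * Q = X * d⁄dX A (Q - P) - F * (Q - P) - (F - E) * P := by
    rw [map_sub, mul_sub, h]
    ring
  rw [key]
  exact dvd_sub (dvd_sub (X_pow_dvd_X_mul_derivative hQ) (hQ.mul_left F)) (hF.mul_right P)

theorem X_pow_dvd_sub [Algebra ℚ A] (hP : HasLogDeriv P E) (hQ : HasLogDeriv Q F)
    (hP1 : constantCoeff P = 1) (hQ1 : constantCoeff Q = 1) {m : ℕ} (hEF : X ^ m ∣ E - F) :
    X ^ m ∣ P - Q := by
  induction m with
  | zero => simp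
  | succ m ih =>
    obtain ⟨G, hG⟩ := ih (dvd_trans (pow_dvd_pow X m.le_succ) hEF)
    have hF0 : constantCoeff F = 0 := by
      simpa [hQ1] using (congrArg constantCoeff hQ).symm
    have key : X * d⁄dX A (P - Q) = (E - F) * P + X ^ m * (F * G) := by
      unfold HasLogDeriv at hP hQ
      rw [map_sub, mul_sub, hP, hQ, ← mul_assoc, mul_comm (X ^ m), mul_assoc, ← hG]
      ring
    -- the coefficient of `X ^ m` in `key` reads `m • G(0) = F(0) G(0) = 0`
    have hm : (m : A) * constantCoeff G = 0 := by
      have h0 : coeff m ((E - F) * P) = 0 := X_pow_dvd_iff.1 (hEF.mul_right P) m m.lt_succ_self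
      have := congrArg (coeff m) key
      rwa [coeff_X_mul_derivative, map_add, h0, zero_add, coeff_X_pow_mul', if_pos le_rfl,
        Nat.sub_self, coeff_zero_eq_constantCoeff_apply, map_mul, hF0, zero_mul, hG,
        coeff_X_pow_mul', if_pos le_rfl, Nat.sub_self, coeff_zero_eq_constantCoeff_apply] at this
    have hG0 : constantCoeff G = 0 := by
      rcases Nat.eq_zero_or_pos m with rfl | hpos
      · simpa [hP1, hQ1] using (congrArg constantCoeff hG).symm
      · have hu : IsUnit (m : A) := by
          simpa using (IsUnit.mk0 (m : ℚ) (by positivity)).map (algebraMap ℚ A)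
        exact hu.mul_right_eq_zero.1 hm
    rw [hG, pow_succ]
    exact mul_dvd_mul_left _ (X_dvd_iff.2 hG0)

end HasLogDeriv

theorem hasLogDeriv_one_sub_X :
    HasLogDeriv (1 - X : A⟦X⟧) (-PowerSeries.mk ⇑(ζ : ArithmeticFunction A)) := by
  have hζ : PowerSeries.mk ⇑(ζ : ArithmeticFunction A) = X * PowerSeries.mk 1 := by
    ext n
    cases n <;> simp [coeff_succ_X_mul]
  rw [hζ, HasLogDeriv, map_sub, derivative_X, Derivation.map_one_eq_zero, neg_mul, mul_assoc,
    mk_one_mul_one_sub_eq_one]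
  ring

theorem logDeriv_zsmul_of_map_add {M : Type*} [AddCommGroup M] {σ L : M → A⟦X⟧}
    (hunit : ∀ r, IsUnit (σ r)) (hadd : ∀ r s, σ (r + s) = σ r * σ s)
    (hL : ∀ r, HasLogDeriv (σ r) (L r)) (z : ℤ) (r : M) : L (z • r) = z • L r :=
  map_zsmul (AddMonoidHom.mk' L fun r s =>
    (hL (r + s)).unique (hunit (r + s)) (by rw [hadd]; exact (hL r).mul (hL s))) z r

end LogDeriv

section ExpLog

variable {A : Type*} [CommRing A] [Algebra ℚ A]

theorem expPS_eq_subst {g : A⟦X⟧} (hg : constantCoeff g = 0) :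
    expPS g = (exp A).subst g := by
  ext n
  rw [coeff_subst' (HasSubst.of_constantCoeff_zero' hg), finsum_eq_sum_of_support_subset _
    (s := range (n + 1)) fun m hm => mem_range.2 (not_le.1 fun h => hm (by
      rw [coeff_pow_of_lt hg (Nat.lt_of_succ_le h), smul_zero]))]
  simp [expPS, Algebra.smul_def]

theorem logOnePlus_eq_subst {h : A⟦X⟧} (hh : constantCoeff h = 0) :
    logOnePlus h = (log A).subst h := by
  ext n
  have hsupp : Function.support (fun m => coeff m (log A) • coeff n (h ^ m)) ⊆ Icc 1 n := by
    intro m hm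
    rw [Function.mem_support] at hm
    rw [coe_Icc, Set.mem_Icc]
    constructor
    · by_contra! h0
      simp_all
    · by_contra! hlt
      rw [coeff_pow_of_lt hh hlt, smul_zero] at hm
      exact hm rfl
  rw [coeff_subst' (HasSubst.of_constantCoeff_zero' hh), finsum_eq_sum_of_support_subset _ hsupp,
    logOnePlus, coeff_mk]
  refine sum_congr rfl fun m hm => ?_
  rw [coeff_log, if_neg (by grind), smul_eq_mul, Algebra.smul_def, div_eq_mul_inv]

theorem constantCoeff_expPS (g : A⟦X⟧) : constantCoeff (expPS g) = 1 := by
  rw [← coeff_zero_eq_constantCoeff_apply, expPS, coeff_mk]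
  simp

theorem constantCoeff_logOnePlus (h : A⟦X⟧) : constantCoeff (logOnePlus h) = 0 := by
  rw [← coeff_zero_eq_constantCoeff_apply, logOnePlus, coeff_mk]
  simp

theorem hasLogDeriv_expPS {g : A⟦X⟧} (hg : constantCoeff g = 0) :
    HasLogDeriv (expPS g) (X * d⁄dX A g) := by
  rw [HasLogDeriv, expPS_eq_subst hg, derivative_subst (HasSubst.of_constantCoeff_zero' hg),
    derivative_exp]
  ring

theorem derivative_log_mul_one_add_X : d⁄dX A (log A) * (1 + X) = 1 := by
  ext n
  rw [deriv_log, mul_add, mul_one, map_add]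
  cases n with
  | zero => simp
  | succ n => simp [coeff_succ_mul_X, pow_succ]

theorem X_mul_derivative_logOnePlus {h E : A⟦X⟧} (hh : constantCoeff h = 0)
    (hE : HasLogDeriv (1 + h) E) : X * d⁄dX A (logOnePlus h) = E := by
  have hsubst := HasSubst.of_constantCoeff_zero' hh
  have hinv : (d⁄dX A (log A)).subst h * (1 + h) = 1 := by
    have := congrArg (substAlgHom hsubst) (derivative_log_mul_one_add_X (A := A))
    rwa [map_mul, map_add, map_one, substAlgHom_X, coe_substAlgHom] at this
  refine (IsUnit.of_mul_eq_one_right _ hinv).mul_right_cancel ?_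
  unfold HasLogDeriv at hE
  rw [logOnePlus_eq_subst hh, derivative_subst hsubst, ← hE, map_add,
    Derivation.map_one_eq_zero, zero_add]
  linear_combination (X * d⁄dX A h) * hinv

theorem HasLogDeriv.expPS_smul_logOnePlus {G B : A⟦X⟧} (hG1 : constantCoeff G = 1)
    (hG : HasLogDeriv G B) (c : A) : HasLogDeriv (expPS (c • logOnePlus (G - 1))) (c • B) := by
  have hL : X * d⁄dX A (logOnePlus (G - 1)) = B :=
    X_mul_derivative_logOnePlus (by simp [hG1]) (by rwa [add_sub_cancel])
  have := hasLogDeriv_expPS (g := c • logOnePlus (G - 1)) (by simp [constantCoeff_logOnePlus])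
  rwa [Derivation.map_smul, mul_smul_comm, hL] at this

end ExpLog

def eulerWeight (A : Type*) [CommRing A] (a : ℕ → ℤ) : ArithmeticFunction A :=
  ⟨fun k => k * a k, by simp⟩

section EulerProduct

variable {A : Type*} [CommRing A]

theorem coeff_sum_nsmul_substPow (g : ℕ → A⟦X⟧) (hg : ∀ k, constantCoeff (g k) = 0)
    {i N : ℕ} (hi : i ≤ N) :
    coeff i (∑ k ∈ Icc 1 N, k • substPow k (g k)) =
      ∑ k ∈ i.divisors, k • coeff (i / k) (g k) := by
  simp only [map_sum, map_nsmul, substPow, coeff_mk, smul_ite, smul_zero]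
  rcases Nat.eq_zero_or_pos i with rfl | hpos
  · simp [hg]
  · rw [← sum_filter]
    congr 1
    ext k
    simp only [mem_filter, mem_Icc, Nat.mem_divisors]
    constructor
    · exact fun h => ⟨h.2, hpos.ne'⟩
    · exact fun h =>
        ⟨⟨Nat.pos_of_dvd_of_pos h.1 hpos, (Nat.le_of_dvd hpos h.1).trans hi⟩, h.1⟩

theorem X_pow_dvd_prod_sub_one {ι : Type*} {s : Finset ι} {u : ι → A⟦X⟧} {m : ℕ}
    (h : ∀ i ∈ s, X ^ m ∣ u i - 1) : X ^ m ∣ ∏ i ∈ s, u i - 1 :=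
  prod_induction u (fun x => X ^ m ∣ x - 1)
    (fun a b ha hb => by
      rw [show a * b - 1 = a * (b - 1) + (a - 1) by ring]
      exact dvd_add (hb.mul_left a) ha)
    (by simp) h

theorem X_pow_dvd_unitZPow_sub_one {g : A⟦X⟧} {m : ℕ} (hu : IsUnit g)
    (h : X ^ m ∣ g - 1) (z : ℤ) : X ^ m ∣ unitZPow g z - 1 := by
  unfold unitZPow
  split_ifs
  · exact h.trans (sub_one_dvd_pow_sub_one g _)
  · set n := (-z).toNat
    rw [show Ring.inverse (g ^ n) - 1 = -(Ring.inverse (g ^ n) * (g ^ n - 1)) by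
      rw [mul_sub, Ring.inverse_mul_cancel _ (hu.pow n)]; ring]
    exact ((h.trans (sub_one_dvd_pow_sub_one g n)).mul_left _).neg_right

theorem coeff_prod_Icc_eq_of_X_pow_dvd {u : ℕ → A⟦X⟧} (hu : ∀ k, X ^ k ∣ u k - 1)
    {j n : ℕ} (hjn : j ≤ n) :
    coeff j (∏ k ∈ Icc 1 n, u k) = coeff j (∏ k ∈ Icc 1 j, u k) := by
  have hIcc : ∀ m, Icc 1 m = Ioc 0 m := fun m => by ext; simp; omega
  have htail : X ^ (j + 1) ∣ ∏ k ∈ Ioc j n, u k - 1 :=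
    X_pow_dvd_prod_sub_one fun k hk => (pow_dvd_pow X (mem_Ioc.1 hk).1).trans (hu k)
  rw [hIcc, hIcc, ← prod_Ioc_consecutive u (Nat.zero_le j) hjn, ← sub_eq_zero, ← map_sub,
    ← mul_sub_one]
  exact X_pow_dvd_iff.1 (htail.mul_left _) j j.lt_succ_self

theorem sum_divisors_nsmul_zsmul (a : ℕ → ℤ) (g : ArithmeticFunction A) (i : ℕ) :
    ∑ k ∈ i.divisors, k • (a k • g (i / k)) = (eulerWeight A a * g) i := by
  rw [mul_apply, Nat.sum_divisorsAntidiagonal (fun x y => eulerWeight A a x * g y)]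
  refine sum_congr rfl fun k _ => ?_
  simp [eulerWeight, nsmul_eq_mul, zsmul_eq_mul, mul_assoc]

theorem map_intCast_eulerWeight_mul_zeta (a : ℕ → ℤ) :
    PowerSeries.map (Int.castRingHom A) (PowerSeries.mk ⇑(eulerWeight ℤ a * ζ)) =
      PowerSeries.mk ⇑(eulerWeight A a * ζ) := by
  ext i
  rw [coeff_map, coeff_mk, coeff_mk, coe_mul_zeta_apply, coe_mul_zeta_apply]
  simp [eulerWeight]

theorem hasLogDeriv_unitZPow_one_sub_X_pow {k : ℕ} (hk : k ≠ 0) (b : ℤ) :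
    HasLogDeriv (unitZPow (1 - X ^ k : A⟦X⟧) (-b))
      (k • substPow k (b • PowerSeries.mk ⇑(ζ : ArithmeticFunction A))) := by
  have hsub : substPow k (1 - X : A⟦X⟧) = 1 - X ^ k := by
    rw [substPow_eq_expand hk, map_sub, map_one, expand_X]
  have hunit : IsUnit (1 - X ^ k : A⟦X⟧) := by
    rw [isUnit_iff_constantCoeff]; simp [zero_pow hk]
  have := (hasLogDeriv_one_sub_X.substPow hk).unitZPow (hsub ▸ hunit) (-b)
  rw [hsub] at this
  convert this using 1
  rw [substPow_eq_expand hk, substPow_eq_expand hk, map_neg, map_zsmul, smul_comm, neg_smul,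
    smul_neg, smul_neg, neg_neg]

theorem hasLogDeriv_of_coeff_eq_eulerProduct (f : A⟦X⟧) (a : ℕ → ℤ)
    (ha : ∀ n, coeff n f = coeff n (∏ k ∈ Icc 1 n, unitZPow (1 - X ^ k) (-(a k)))) :
    HasLogDeriv f (PowerSeries.mk ⇑(eulerWeight A a * ζ)) := by
  set u : ℕ → A⟦X⟧ := fun k => unitZPow (1 - X ^ k) (-(a k))
  have hu : ∀ k, X ^ k ∣ u k - 1 := by
    intro k
    rcases eq_or_ne k 0 with rfl | hk
    · simp
    · refine X_pow_dvd_unitZPow_sub_one ?_ (by simp) _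
      rw [isUnit_iff_constantCoeff]; simp [zero_pow hk]
  suffices h : ∀ n,
      X ^ (n + 1) ∣ X * d⁄dX A f - PowerSeries.mk ⇑(eulerWeight A a * ζ) * f by
    refine PowerSeries.ext fun n => ?_
    rw [← sub_eq_zero, ← map_sub]
    exact X_pow_dvd_iff.1 (h n) n n.lt_succ_self
  intro n
  have hP : HasLogDeriv (∏ k ∈ Icc 1 n, u k)
      (∑ k ∈ Icc 1 n,
        k • substPow k (a k • PowerSeries.mk ⇑(ζ : ArithmeticFunction A))) :=
    HasLogDeriv.prod fun k hk => hasLogDeriv_unitZPow_one_sub_X_pow (by grind) (a k)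
  refine hP.X_pow_dvd_of_congr (X_pow_dvd_iff.2 fun j hj => ?_)
    (X_pow_dvd_iff.2 fun i hi => ?_)
  · rw [map_sub, sub_eq_zero, ha j, coeff_prod_Icc_eq_of_X_pow_dvd hu (Nat.le_of_lt_succ hj)]
  · rw [map_sub, sub_eq_zero, coeff_mk,
      coeff_sum_nsmul_substPow _ (by simp) (Nat.le_of_lt_succ hi)]
    simp only [map_zsmul, coeff_mk]
    exact (sum_divisors_nsmul_zsmul a _ i).symm

end EulerProduct

def adamsFun {R : Type*} [CommRing R] (ψ : ℕ → R → R) (r : R) : ArithmeticFunction R :=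
  ⟨fun k => if k = 0 then 0 else ψ k r, if_pos rfl⟩

section Adams

variable {R : Type*} [CommRing R] [Algebra ℚ R]

theorem nsmul_moebiusAdams (ψ : ℕ → R → R) (r : R) {k : ℕ} (hk : k ≠ 0) :
    k • moebiusAdams ψ k r = ((μ : ArithmeticFunction R) * adamsFun ψ r) k := by
  rw [moebiusAdams, ← Nat.cast_smul_eq_nsmul ℚ, smul_smul,
    mul_inv_cancel₀ (by exact_mod_cast hk), one_smul, mul_apply,
    Nat.sum_divisorsAntidiagonal' (fun x y => (μ : ArithmeticFunction R) x * adamsFun ψ r y)]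
  refine sum_congr rfl fun d hd => ?_
  simp [adamsFun, zsmul_eq_mul, (Nat.pos_of_mem_divisors hd).ne']

theorem sum_divisors_nsmul_moebiusAdams (ψ : ℕ → R → R) (r : R) (B : ArithmeticFunction R)
    (i : ℕ) :
    ∑ k ∈ i.divisors, k • (moebiusAdams ψ k r * (B * ζ) (i / k)) =
      (B * adamsFun ψ r) i := by
  calc ∑ k ∈ i.divisors, k • (moebiusAdams ψ k r * (B * ζ) (i / k))
      = ((μ * adamsFun ψ r) * (B * ζ)) i := by
        rw [mul_apply,
          Nat.sum_divisorsAntidiagonal (fun x y => (μ * adamsFun ψ r) x * (B * ζ) y)]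
        refine sum_congr rfl fun k hk => ?_
        rw [← nsmul_moebiusAdams ψ r (Nat.pos_of_mem_divisors hk).ne', smul_mul_assoc]
    _ = (B * adamsFun ψ r * (μ * ζ)) i := by congr 1; ring
    _ = (B * adamsFun ψ r) i := by rw [coe_moebius_mul_coe_zeta, mul_one]

end Adams

theorem stmt7_general {R : Type*} [CommRing R] [Algebra ℚ R] (σ : R → PowerSeries R)
    (hconst : ∀ r, PowerSeries.constantCoeff (R := R) (σ r) = 1)
    (hmul : ∀ r s, σ (r + s) = σ r * σ s)
    (ψ : ℕ → R → R)
    (hψ : ∀ r, (PowerSeries.mk fun k => if k = 0 then 0 else ψ k r) * σ r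
        = PowerSeries.X * PowerSeries.derivative R (σ r))
    (f : PowerSeries ℤ) (hf : PowerSeries.constantCoeff (R := ℤ) f = 1)
    (a : ℕ → ℤ)
    (ha : ∀ n : ℕ,
      PowerSeries.coeff (R := ℤ) n f
        = PowerSeries.coeff (R := ℤ) n
            (∏ k ∈ Finset.Icc 1 n, unitZPow (1 - PowerSeries.X ^ k) (-(a k)))) :
    ∀ (r : R) (n : ℕ),
      PowerSeries.coeff (R := R) n (∏ k ∈ Finset.Icc 1 n, substPow k (σ (a k • r)))
        = PowerSeries.coeff (R := R) n
            (∏ k ∈ Finset.Icc 1 n,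
              expPS (moebiusAdams ψ k r •
                logOnePlus (substPow k (PowerSeries.map (Int.castRingHom R) f) - 1))) := by
  intro r n
  set F := PowerSeries.map (Int.castRingHom R) f
  set B : ArithmeticFunction R := eulerWeight R a * ζ
  have hF : HasLogDeriv F (PowerSeries.mk B) := by
    simpa [map_intCast_eulerWeight_mul_zeta] using
      (hasLogDeriv_of_coeff_eq_eulerProduct f a ha).map (Int.castRingHom R)
  have hF1 : constantCoeff F = 1 := by
    rw [← coeff_zero_eq_constantCoeff_apply, coeff_map]
    simp [hf]
  have hσ : ∀ s, HasLogDeriv (σ s) (PowerSeries.mk (adamsFun ψ s)) := fun s => (hψ s).symm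
  have hadams : ∀ (z : ℤ) s,
      PowerSeries.mk (adamsFun ψ (z • s)) = z • PowerSeries.mk (adamsFun ψ s) :=
    logDeriv_zsmul_of_map_add (fun s => isUnit_iff_constantCoeff.2 (by simp [hconst])) hmul hσ
  have hL : HasLogDeriv (∏ k ∈ Icc 1 n, substPow k (σ (a k • r)))
      (∑ k ∈ Icc 1 n, k • substPow k (PowerSeries.mk (adamsFun ψ (a k • r)))) :=
    HasLogDeriv.prod fun k hk => (hσ _).substPow (by grind)
  have hR : HasLogDeriv
      (∏ k ∈ Icc 1 n, expPS (moebiusAdams ψ k r • logOnePlus (substPow k F - 1)))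
      (∑ k ∈ Icc 1 n, k • substPow k (moebiusAdams ψ k r • PowerSeries.mk B)) := by
    refine HasLogDeriv.prod fun k hk => ?_
    rw [substPow_smul, smul_comm]
    exact (hF.substPow (by grind)).expPS_smul_logOnePlus
      (by rw [constantCoeff_substPow, hF1]) _
  have hPQ := hL.X_pow_dvd_sub hR (m := n + 1) (by simp [constantCoeff_substPow, hconst])
    (by simp [constantCoeff_expPS]) <| X_pow_dvd_iff.2 fun i hi => by
      rw [map_sub, sub_eq_zero, coeff_sum_nsmul_substPow _ (by simp [adamsFun]) (by omega),
        coeff_sum_nsmul_substPow _ (by simp [B]) (by omega)]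
      simp only [hadams, map_zsmul, coeff_smul, coeff_mk, smul_eq_mul]
      rw [sum_divisors_nsmul_zsmul, sum_divisors_nsmul_moebiusAdams]
  simpa [sub_eq_zero] using X_pow_dvd_iff.1 hPQ n n.lt_succ_self

/-- let `R` be a commutative `ℚ`-algebra with a pre-λ structure `σ` (constant
coefficient `1`, `σ(r+s) = σ(r)·σ(s)`, coefficient of `t` equal to `r`, `σ(1) = Σ t^k`),
with Adams operations `ψ_k` given by the logarithmic-derivative equation.  Let `f ∈ ℤ[[t]]`
have constant coefficient `1` and let `(a_k)` be the unique integers with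
`f = Π_{k≥1}(1 - t^k)^{-a_k}`.  Then the power-structure exponential
`f^{Pow r} := Π_{k≥1} σ(a_k·r)(t^k)` equals `Π_{k≥1} exp(ψ'_k(r)·log f(t^k))`, both infinite
products converging coefficientwise (in degree `n` only factors with `k ≤ n` contribute). -/
theorem stmt7 {R : Type*} [CommRing R] [Algebra ℚ R] (σ : R → PowerSeries R)
    (hconst : ∀ r, PowerSeries.constantCoeff (R := R) (σ r) = 1)
    (hmul : ∀ r s, σ (r + s) = σ r * σ s)
    (hone : ∀ r, PowerSeries.coeff (R := R) 1 (σ r) = r)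
    (hσ1 : σ 1 = PowerSeries.mk fun _ => (1 : R))
    (ψ : ℕ → R → R)
    (hψ : ∀ r, (PowerSeries.mk fun k => if k = 0 then 0 else ψ k r) * σ r
        = PowerSeries.X * PowerSeries.derivative R (σ r))
    (f : PowerSeries ℤ) (hf : PowerSeries.constantCoeff (R := ℤ) f = 1)
    (a : ℕ → ℤ)
    (ha : ∀ n : ℕ,
      PowerSeries.coeff (R := ℤ) n f
        = PowerSeries.coeff (R := ℤ) n
            (∏ k ∈ Finset.Icc 1 n, unitZPow (1 - PowerSeries.X ^ k) (-(a k)))) :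
    ∀ (r : R) (n : ℕ),
      PowerSeries.coeff (R := R) n (∏ k ∈ Finset.Icc 1 n, substPow k (σ (a k • r)))
        = PowerSeries.coeff (R := R) n
            (∏ k ∈ Finset.Icc 1 n,
              expPS (moebiusAdams ψ k r •
                logOnePlus (substPow k (PowerSeries.map (Int.castRingHom R) f) - 1))) :=
  stmt7_general σ hconst hmul ψ hψ f hf a ha
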